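/- arXiv:1804.08934 — 2 statements merged into one kernel-verified Lean document; each statement's English description precedes it below -/
import Mathlib

section
/- Let s be a nonzero complex polynomial. Then H^p = s·H^p + P_{deg(s)-1} if and only if s has no roots on the unit circle. -/
open Complex MeasureTheory Metric Polynomial Pointwise

noncomputable section

/-- Membership in the Hardy space `H^p` of the unit disc: analytic on the open
unit disc with uniformly bounded `p`-means on circles of radius `r < 1`. -/
def MemHp (p : ℝ) (f : ℂ → ℂ) : Prop :=
  AnalyticOn ℂ f (ball (0 : ℂ) 1) ∧
  ∃ C : ℝ, ∀ r : ℝ, 0 ≤ r → r < 1 →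
    (∫ θ in (0:ℝ)..(2 * Real.pi),
      ‖f ((r : ℂ) * Complex.exp (θ * Complex.I))‖ ^ p) ≤ C

/-- The Hardy space `H^p` as a set of functions. -/
def Hp (p : ℝ) : Set (ℂ → ℂ) := {f | MemHp p f}

/-- Multiplication of a set of functions by a polynomial: `s·S`. -/
def polyMul (s : Polynomial ℂ) (S : Set (ℂ → ℂ)) : Set (ℂ → ℂ) :=
  (fun f => fun z => s.eval z * f z) '' S

/-- The polynomials of degree `< n`, viewed as functions. -/
def polyLt (n : WithBot ℕ) : Set (ℂ → ℂ) :=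
  {f | ∃ r : Polynomial ℂ, r.degree < n ∧ f = fun z => r.eval z}

/-- The constant functions. -/
def consts : Set (ℂ → ℂ) := {f | ∃ c : ℂ, f = fun _ => c}


lemma memBall_aux {r : ℝ} (θ : ℝ) (hr0 : 0 ≤ r) (hr1 : r < 1) :
    (r : ℂ) * Complex.exp (θ * Complex.I) ∈ ball (0:ℂ) 1 := by
  simp only [mem_ball, dist_zero_right, norm_mul,
    Complex.norm_real, Real.norm_eq_abs, Complex.norm_exp_ofReal_mul_I, mul_one, _root_.abs_of_nonneg hr0]
  exact hr1

lemma cont_circle {f : ℂ → ℂ} (hf : ContinuousOn f (ball (0:ℂ) 1)) {r : ℝ}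
    (hr0 : 0 ≤ r) (hr1 : r < 1) :
    Continuous fun θ : ℝ => f ((r : ℂ) * Complex.exp (θ * Complex.I)) := by
  apply hf.comp_continuous
  · exact continuous_const.mul (Complex.continuous_exp.comp (by continuity))
  · exact fun θ => memBall_aux θ hr0 hr1

lemma cont_integrand {f : ℂ → ℂ} (hf : ContinuousOn f (ball (0:ℂ) 1)) {p r : ℝ}
    (hp : 0 ≤ p) (hr0 : 0 ≤ r) (hr1 : r < 1) :
    Continuous fun θ : ℝ => ‖f ((r : ℂ) * Complex.exp (θ * Complex.I))‖ ^ p := by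
  have h1 : Continuous fun θ : ℝ => ‖f ((r:ℂ) * Complex.exp (θ * Complex.I))‖ :=
    continuous_norm.comp (cont_circle hf hr0 hr1)
  rw [continuous_iff_continuousAt]
  exact fun θ => (Real.continuousAt_rpow_const _ _ (Or.inr hp)).comp h1.continuousAt

lemma rpow_add_le {a b p : ℝ} (ha : 0 ≤ a) (hb : 0 ≤ b) (hp : 0 ≤ p) :
    (a + b) ^ p ≤ 2 ^ p * (a ^ p + b ^ p) := by
  have h1 : a + b ≤ 2 * max a b := by
    rcases le_total a b with h | h
    · simp [max_eq_right h]; linarith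
    · simp [max_eq_left h]; linarith
  have h2 : (a + b) ^ p ≤ (2 * max a b) ^ p :=
    Real.rpow_le_rpow (by positivity) h1 hp
  have h3 : (2 * max a b : ℝ) ^ p = 2 ^ p * (max a b) ^ p :=
    Real.mul_rpow (by norm_num) (le_max_of_le_left ha)
  have h4 : (max a b) ^ p ≤ a ^ p + b ^ p := by
    rcases le_total a b with h | h
    · rw [max_eq_right h]; nlinarith [Real.rpow_nonneg ha p]
    · rw [max_eq_left h]; nlinarith [Real.rpow_nonneg hb p]
  calc (a + b) ^ p ≤ 2 ^ p * (max a b) ^ p := h3 ▸ h2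
    _ ≤ 2 ^ p * (a ^ p + b ^ p) := by
        have : (0:ℝ) ≤ 2 ^ p := Real.rpow_nonneg (by norm_num) p
        nlinarith

/-- If `f` is analytic on the ball and `|f| ≤ M` there, then `f ∈ H^p`. -/
lemma memHp_of_bounded {p : ℝ} (hp : 0 ≤ p) {f : ℂ → ℂ} {M : ℝ}
    (hf : AnalyticOn ℂ f (ball (0:ℂ) 1)) (hM : ∀ z ∈ ball (0:ℂ) 1, ‖f z‖ ≤ M) :
    MemHp p f := by
  refine ⟨hf, 2 * Real.pi * M ^ p, fun r hr0 hr1 => ?_⟩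
  have hM0 : (0:ℝ) ≤ M := le_trans (norm_nonneg _) (hM 0 (by simp))
  have hle : ∀ θ ∈ Set.Icc (0:ℝ) (2 * Real.pi),
      ‖f ((r:ℂ) * Complex.exp (θ * Complex.I))‖ ^ p ≤ M ^ p := fun θ _ =>
    Real.rpow_le_rpow (norm_nonneg _) (hM _ (memBall_aux θ hr0 hr1)) hp
  calc (∫ θ in (0:ℝ)..(2 * Real.pi), ‖f ((r:ℂ) * Complex.exp (θ * Complex.I))‖ ^ p)
      ≤ ∫ _ in (0:ℝ)..(2 * Real.pi), M ^ p := by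
        apply intervalIntegral.integral_mono_on Real.two_pi_pos.le
          ((cont_integrand hf.continuousOn hp hr0 hr1).intervalIntegrable _ _)
          (intervalIntegrable_const) hle
    _ = 2 * Real.pi * M ^ p := by simp [mul_comm]

lemma int_integrand {f : ℂ → ℂ} (hf : ContinuousOn f (ball (0:ℂ) 1)) {p r : ℝ}
    (hp : 0 ≤ p) (hr0 : 0 ≤ r) (hr1 : r < 1) (a b : ℝ) :
    IntervalIntegrable (fun θ : ℝ => ‖f ((r : ℂ) * Complex.exp (θ * Complex.I))‖ ^ p)
      volume a b :=
  (cont_integrand hf hp hr0 hr1).intervalIntegrable a b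

/-- `H^p` is closed under addition. -/
lemma MemHp.add {p : ℝ} (hp : 0 ≤ p) {f g : ℂ → ℂ} (hf : MemHp p f) (hg : MemHp p g) :
    MemHp p (f + g) := by
  obtain ⟨haf, Cf, hCf⟩ := hf
  obtain ⟨hag, Cg, hCg⟩ := hg
  refine ⟨haf.add hag, 2 ^ p * (Cf + Cg), fun r hr0 hr1 => ?_⟩
  have key : ∀ θ : ℝ, ‖(f + g) ((r:ℂ) * Complex.exp (θ * Complex.I))‖ ^ p ≤
      2 ^ p * (‖f ((r:ℂ) * Complex.exp (θ * Complex.I))‖ ^ p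
        + ‖g ((r:ℂ) * Complex.exp (θ * Complex.I))‖ ^ p) := by
    intro θ
    set z := (r:ℂ) * Complex.exp (θ * Complex.I)
    calc ‖(f + g) z‖ ^ p ≤ (‖f z‖ + ‖g z‖) ^ p := by
          apply Real.rpow_le_rpow (norm_nonneg _) _ hp
          exact norm_add_le _ _
      _ ≤ 2 ^ p * (‖f z‖ ^ p + ‖g z‖ ^ p) :=
          rpow_add_le (norm_nonneg _) (norm_nonneg _) hp
  have hif := int_integrand haf.continuousOn hp hr0 hr1 (0:ℝ) (2 * Real.pi)
  have hig := int_integrand hag.continuousOn hp hr0 hr1 (0:ℝ) (2 * Real.pi)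
  have hifg := int_integrand (haf.add hag).continuousOn hp hr0 hr1 (0:ℝ) (2 * Real.pi)
  calc (∫ θ in (0:ℝ)..(2 * Real.pi), ‖(f+g) ((r:ℂ) * Complex.exp (θ * Complex.I))‖ ^ p)
      ≤ ∫ θ in (0:ℝ)..(2 * Real.pi), 2 ^ p * (‖f ((r:ℂ) * Complex.exp (θ * Complex.I))‖ ^ p
          + ‖g ((r:ℂ) * Complex.exp (θ * Complex.I))‖ ^ p) := by
        apply intervalIntegral.integral_mono_on Real.two_pi_pos.le hifg
          (((hif.add hig).const_mul _)) (fun θ _ => key θ)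
    _ = 2 ^ p * ((∫ θ in (0:ℝ)..(2 * Real.pi), ‖f ((r:ℂ) * Complex.exp (θ * Complex.I))‖ ^ p)
          + ∫ θ in (0:ℝ)..(2 * Real.pi), ‖g ((r:ℂ) * Complex.exp (θ * Complex.I))‖ ^ p) := by
        rw [intervalIntegral.integral_const_mul, intervalIntegral.integral_add hif hig]
    _ ≤ 2 ^ p * (Cf + Cg) := by
        have h2 : (0:ℝ) ≤ 2 ^ p := Real.rpow_nonneg (by norm_num) p
        have := hCf r hr0 hr1; have := hCg r hr0 hr1
        nlinarith

/-- Multiplying an `H^p` function by an analytic function bounded on the ball stays in `H^p`. -/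
lemma MemHp.mul_bounded {p : ℝ} (hp : 0 ≤ p) {h f : ℂ → ℂ} {M : ℝ}
    (hh : AnalyticOn ℂ h (ball (0:ℂ) 1)) (hM : ∀ z ∈ ball (0:ℂ) 1, ‖h z‖ ≤ M)
    (hf : MemHp p f) : MemHp p (fun z => h z * f z) := by
  obtain ⟨haf, Cf, hCf⟩ := hf
  have hM0 : (0:ℝ) ≤ M := le_trans (norm_nonneg _) (hM 0 (by simp))
  refine ⟨hh.mul haf, M ^ p * Cf, fun r hr0 hr1 => ?_⟩
  have key : ∀ θ ∈ Set.Icc (0:ℝ) (2 * Real.pi),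
      ‖(fun z => h z * f z) ((r:ℂ) * Complex.exp (θ * Complex.I))‖ ^ p ≤
      M ^ p * ‖f ((r:ℂ) * Complex.exp (θ * Complex.I))‖ ^ p := by
    intro θ _
    set z := (r:ℂ) * Complex.exp (θ * Complex.I) with hz
    have hzb : z ∈ ball (0:ℂ) 1 := memBall_aux θ hr0 hr1
    calc ‖h z * f z‖ ^ p = (‖h z‖ * ‖f z‖) ^ p := by
          rw [norm_mul]
      _ ≤ (M * ‖f z‖) ^ p := Real.rpow_le_rpow (by positivity)
          (mul_le_mul_of_nonneg_right (hM z hzb) (norm_nonneg _)) hp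
      _ = M ^ p * ‖f z‖ ^ p := Real.mul_rpow hM0 (norm_nonneg _)
  have hif := int_integrand haf.continuousOn hp hr0 hr1 (0:ℝ) (2 * Real.pi)
  have hihf := int_integrand (hh.mul haf).continuousOn hp hr0 hr1 (0:ℝ) (2 * Real.pi)
  calc (∫ θ in (0:ℝ)..(2 * Real.pi),
        ‖(fun z => h z * f z) ((r:ℂ) * Complex.exp (θ * Complex.I))‖ ^ p)
      ≤ ∫ θ in (0:ℝ)..(2 * Real.pi),
          M ^ p * ‖f ((r:ℂ) * Complex.exp (θ * Complex.I))‖ ^ p :=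
        intervalIntegral.integral_mono_on Real.two_pi_pos.le hihf (hif.const_mul _) key
    _ = M ^ p * ∫ θ in (0:ℝ)..(2 * Real.pi),
          ‖f ((r:ℂ) * Complex.exp (θ * Complex.I))‖ ^ p :=
        intervalIntegral.integral_const_mul _ _
    _ ≤ M ^ p * Cf := by
        have : (0:ℝ) ≤ M ^ p := Real.rpow_nonneg hM0 p
        nlinarith [hCf r hr0 hr1]

/-- pointwise bound: `a ≤ (b + K)/δ` implies `a^p ≤ δ⁻¹^p 2^p (b^p + K^p)`. -/
lemma rpow_quot_bound {a b K δ p : ℝ} (hp : 0 ≤ p) (ha : 0 ≤ a) (hb : 0 ≤ b) (hK : 0 ≤ K)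
    (hδ : 0 < δ) (h : a ≤ (b + K) / δ) :
    a ^ p ≤ (δ⁻¹ ^ p * 2 ^ p) * (b ^ p + K ^ p) := by
  have h1 : a ^ p ≤ ((b + K) / δ) ^ p := Real.rpow_le_rpow ha h hp
  have h2 : ((b + K) / δ) ^ p = (b + K) ^ p * δ⁻¹ ^ p := by
    rw [div_eq_mul_inv, Real.mul_rpow (by positivity) (by positivity)]
  have h3 : (b + K) ^ p ≤ 2 ^ p * (b ^ p + K ^ p) := rpow_add_le hb hK hp
  have hδp : (0:ℝ) ≤ δ⁻¹ ^ p := Real.rpow_nonneg (by positivity) p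
  calc a ^ p ≤ (b + K) ^ p * δ⁻¹ ^ p := h2 ▸ h1
    _ ≤ (2 ^ p * (b ^ p + K ^ p)) * δ⁻¹ ^ p := mul_le_mul_of_nonneg_right h3 hδp
    _ = (δ⁻¹ ^ p * 2 ^ p) * (b ^ p + K ^ p) := by ring

/-- integral comparison: if `|F|^p ≤ c(|f|^p + K)` on the circle then the `p`-mean of `F`
is at most `c (Cf + 2π K)`. -/
lemma integral_mean_bound {p c K Cf r : ℝ} {F f : ℂ → ℂ}
    (hFc : ContinuousOn F (ball (0:ℂ) 1)) (hfc : ContinuousOn f (ball (0:ℂ) 1))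
    (hp : 0 ≤ p) (hr0 : 0 ≤ r) (hr1 : r < 1) (hc : 0 ≤ c)
    (hCf : (∫ θ in (0:ℝ)..(2 * Real.pi),
        ‖f ((r:ℂ) * Complex.exp (θ * Complex.I))‖ ^ p) ≤ Cf)
    (hpt : ∀ θ ∈ Set.Icc (0:ℝ) (2 * Real.pi),
        ‖F ((r:ℂ) * Complex.exp (θ * Complex.I))‖ ^ p ≤
        c * (‖f ((r:ℂ) * Complex.exp (θ * Complex.I))‖ ^ p + K)) :
    (∫ θ in (0:ℝ)..(2 * Real.pi),
        ‖F ((r:ℂ) * Complex.exp (θ * Complex.I))‖ ^ p) ≤ c * (Cf + 2 * Real.pi * K) := by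
  have hif := int_integrand hfc hp hr0 hr1 (0:ℝ) (2 * Real.pi)
  have hiF := int_integrand hFc hp hr0 hr1 (0:ℝ) (2 * Real.pi)
  calc (∫ θ in (0:ℝ)..(2 * Real.pi), ‖F ((r:ℂ) * Complex.exp (θ * Complex.I))‖ ^ p)
      ≤ ∫ θ in (0:ℝ)..(2 * Real.pi),
          c * (‖f ((r:ℂ) * Complex.exp (θ * Complex.I))‖ ^ p + K) :=
        intervalIntegral.integral_mono_on Real.two_pi_pos.le hiF
          ((hif.add intervalIntegrable_const).const_mul _) hpt
    _ = c * ((∫ θ in (0:ℝ)..(2 * Real.pi),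
          ‖f ((r:ℂ) * Complex.exp (θ * Complex.I))‖ ^ p) + 2 * Real.pi * K) := by
        rw [intervalIntegral.integral_const_mul,
          intervalIntegral.integral_add hif intervalIntegrable_const,
          intervalIntegral.integral_const]
        simp only [smul_eq_mul, sub_zero]
    _ ≤ c * (Cf + 2 * Real.pi * K) := by
        apply mul_le_mul_of_nonneg_left _ hc
        linarith

/-- `H^p` is closed under difference quotients at interior points. -/
lemma MemHp.dslopeMem {p : ℝ} (hp : 0 ≤ p) {f : ℂ → ℂ} (hf : MemHp p f) {ζ : ℂ}
    (hζ : ζ ∈ ball (0:ℂ) 1) : MemHp p (_root_.dslope f ζ) := by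
  obtain ⟨haf, Cf, hCf⟩ := hf
  have hd : DifferentiableOn ℂ (_root_.dslope f ζ) (ball (0:ℂ) 1) :=
    (differentiableOn_dslope (isOpen_ball.mem_nhds hζ)).2 haf.differentiableOn
  have hF : AnalyticOn ℂ (_root_.dslope f ζ) (ball (0:ℂ) 1) := hd.analyticOn isOpen_ball
  set a : ℝ := ‖ζ‖ with ha
  have ha1 : a < 1 := by simpa [Complex.dist_eq] using hζ
  have ha0 : 0 ≤ a := norm_nonneg ζ
  set ρ : ℝ := (1 + a) / 2 with hρ
  have hρ1 : ρ < 1 := by rw [hρ]; linarith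
  have hρa : a < ρ := by rw [hρ]; linarith
  have hρ0 : 0 ≤ ρ := by rw [hρ]; linarith
  set δ : ℝ := (1 - a) / 2 with hδ
  have hδ0 : 0 < δ := by rw [hδ]; linarith
  -- bound on the compact disc of radius ρ
  obtain ⟨M, hM⟩ := (isCompact_closedBall (0:ℂ) ρ).exists_bound_of_continuousOn
    (hF.continuousOn.mono (fun z hz => by
      simp only [mem_closedBall, mem_ball, Complex.dist_eq, sub_zero] at hz ⊢
      exact lt_of_le_of_lt hz hρ1))
  have hM0 : 0 ≤ M := le_trans (norm_nonneg _) (hM 0 (by simp [hρ0]))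
  set K : ℝ := ‖f ζ‖ with hK
  have hK0 : 0 ≤ K := norm_nonneg _
  set c : ℝ := δ⁻¹ ^ p * 2 ^ p with hc
  have hc0 : 0 ≤ c := mul_nonneg (Real.rpow_nonneg (by positivity) p)
    (Real.rpow_nonneg (by norm_num) p)
  set Cf' : ℝ := max Cf 0 with hCf'
  refine ⟨hF, max (2 * Real.pi * M ^ p) (c * (Cf' + 2 * Real.pi * K ^ p)), fun r hr0 hr1 => ?_⟩
  rcases le_or_gt r ρ with hrρ | hrρ
  · -- small radius: use the sup bound on the compact disc
    refine le_trans ?_ (le_max_left _ _)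
    have hle : ∀ θ ∈ Set.Icc (0:ℝ) (2 * Real.pi),
        ‖(_root_.dslope f ζ) ((r:ℂ) * Complex.exp (θ * Complex.I))‖ ^ p ≤ M ^ p := by
      intro θ _
      apply Real.rpow_le_rpow (norm_nonneg _) _ hp
      have : (r:ℂ) * Complex.exp (θ * Complex.I) ∈ closedBall (0:ℂ) ρ := by
        simp only [mem_closedBall, Complex.dist_eq, sub_zero, norm_mul, Complex.norm_real, Real.norm_eq_abs,
          Complex.norm_exp_ofReal_mul_I, mul_one, _root_.abs_of_nonneg hr0]
        exact hrρ
      exact hM _ this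
    calc (∫ θ in (0:ℝ)..(2 * Real.pi),
          ‖(_root_.dslope f ζ) ((r:ℂ) * Complex.exp (θ * Complex.I))‖ ^ p)
        ≤ ∫ _ in (0:ℝ)..(2 * Real.pi), M ^ p :=
          intervalIntegral.integral_mono_on Real.two_pi_pos.le
            (int_integrand hF.continuousOn hp hr0 hr1 _ _) intervalIntegrable_const hle
      _ = 2 * Real.pi * M ^ p := by simp [mul_comm]
  · -- big radius: use the quotient bound
    refine le_trans ?_ (le_max_right _ _)
    have hCf'' : (∫ θ in (0:ℝ)..(2 * Real.pi),
        ‖f ((r:ℂ) * Complex.exp (θ * Complex.I))‖ ^ p) ≤ Cf' :=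
      le_trans (hCf r hr0 hr1) (le_max_left _ _)
    apply integral_mean_bound hF.continuousOn haf.continuousOn hp hr0 hr1 hc0 hCf''
    intro θ _
    set z : ℂ := (r:ℂ) * Complex.exp (θ * Complex.I) with hz
    have hzabs : ‖z‖ = r := by
      simp [hz, norm_mul, Complex.norm_exp_ofReal_mul_I, _root_.abs_of_nonneg hr0]
    have hzζ : z ≠ ζ := by
      intro h
      rw [h, ← ha] at hzabs
      linarith
    have hzd : ‖z - ζ‖ ≥ δ := by
      have h1 : ‖z‖ - ‖ζ‖ ≤ ‖z - ζ‖ := by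
        simpa using norm_sub_norm_le z ζ
      rw [hzabs] at h1
      have : δ ≤ r - a := by rw [hδ]; linarith
      linarith
    have hptw : ‖(_root_.dslope f ζ) z‖ ≤ (‖f z‖ + K) / δ := by
      rw [_root_.dslope_of_ne f hzζ, slope_def_field, norm_div]
      apply div_le_div₀ (by positivity) _ hδ0 hzd
      calc ‖f z - f ζ‖ ≤ ‖f z‖ + ‖f ζ‖ := by
            simpa using norm_sub_le (f z) (f ζ)
        _ = ‖f z‖ + K := rfl
    exact rpow_quot_bound hp (norm_nonneg _) (norm_nonneg _) hK0 hδ0 hptw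

/-- dividing by `z - ζ` for `ζ` outside the closed disc stays in `H^p`. -/
lemma MemHp.div_sub {p : ℝ} (hp : 0 ≤ p) {g : ℂ → ℂ} (hg : MemHp p g) {ζ : ℂ}
    (hζ : 1 < ‖ζ‖) : MemHp p (fun z => (g z - g ζ) / (z - ζ)) := by
  obtain ⟨hag, Cg, hCg⟩ := hg
  have hne : ∀ z ∈ ball (0:ℂ) 1, z - ζ ≠ 0 := by
    intro z hz h
    rw [sub_eq_zero] at h
    rw [mem_ball, Complex.dist_eq, sub_zero, h] at hz
    linarith
  have hF : AnalyticOn ℂ (fun z => (g z - g ζ) / (z - ζ)) (ball (0:ℂ) 1) :=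
    (hag.sub analyticOn_const).div ((analyticOn_id).sub analyticOn_const) hne
  set K : ℝ := ‖g ζ‖ with hK
  have hK0 : 0 ≤ K := norm_nonneg _
  set δ : ℝ := ‖ζ‖ - 1 with hδ
  have hδ0 : 0 < δ := by rw [hδ]; linarith
  set c : ℝ := δ⁻¹ ^ p * 2 ^ p with hc
  have hc0 : 0 ≤ c := mul_nonneg (Real.rpow_nonneg (by positivity) p)
    (Real.rpow_nonneg (by norm_num) p)
  refine ⟨hF, c * (Cg + 2 * Real.pi * K ^ p), fun r hr0 hr1 => ?_⟩
  apply integral_mean_bound hF.continuousOn hag.continuousOn hp hr0 hr1 hc0 (hCg r hr0 hr1)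
  intro θ _
  set z : ℂ := (r:ℂ) * Complex.exp (θ * Complex.I) with hz
  have hzabs : ‖z‖ = r := by
    simp [hz, norm_mul, Complex.norm_exp_ofReal_mul_I, _root_.abs_of_nonneg hr0]
  have hzd : ‖z - ζ‖ ≥ δ := by
    have h1 : ‖ζ‖ - ‖z‖ ≤ ‖ζ - z‖ := by
      simpa using norm_sub_norm_le ζ z
    rw [hzabs] at h1
    have h2 : ‖ζ - z‖ = ‖z - ζ‖ := by rw [← norm_neg, neg_sub]
    rw [hδ]; linarith
  have hptw : ‖(g z - g ζ) / (z - ζ)‖ ≤ (‖g z‖ + K) / δ := by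
    rw [norm_div]
    apply div_le_div₀ (by positivity) _ hδ0 hzd
    simpa using norm_sub_le (g z) (g ζ)
  exact rpow_quot_bound hp (norm_nonneg _) (norm_nonneg _) hK0 hδ0 hptw

lemma hp_division {p : ℝ} (hp : 0 ≤ p) :
    ∀ n : ℕ, ∀ s : Polynomial ℂ, s ≠ 0 → s.natDegree = n →
    (∀ α : ℂ, ‖α‖ = 1 → s.eval α ≠ 0) → ∀ f : ℂ → ℂ, MemHp p f →
    ∃ g : ℂ → ℂ, MemHp p g ∧ ∃ r : Polynomial ℂ, r.degree < s.degree ∧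
      ∀ z, f z = s.eval z * g z + r.eval z := by
  intro n
  induction n with
  | zero =>
    intro s hs hdeg _ f hf
    obtain ⟨c, rfl⟩ : ∃ c : ℂ, s = C c := ⟨s.coeff 0, Polynomial.eq_C_of_natDegree_eq_zero hdeg⟩
    have hc : c ≠ 0 := fun h => hs (by rw [h, map_zero])
    refine ⟨fun z => c⁻¹ * f z, ?_, 0, ?_, ?_⟩
    · exact MemHp.mul_bounded hp analyticOn_const
        (fun z _ => le_of_eq rfl) hf
    · rw [Polynomial.degree_zero, Polynomial.degree_C hc]
      exact WithBot.bot_lt_coe 0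
    · intro z
      simp only [Polynomial.eval_C, Polynomial.eval_zero, add_zero]
      field_simp
  | succ n ih =>
    intro s hs hdeg hcirc f hf
    have hdegpos : 0 < s.degree := by
      rw [Polynomial.degree_eq_natDegree hs, hdeg]
      exact_mod_cast Nat.succ_pos n
    obtain ⟨ζ, hζroot⟩ := Complex.exists_root hdegpos
    have hζ1 : ‖ζ‖ ≠ 1 := fun h => hcirc ζ h hζroot
    obtain ⟨t, ht⟩ : X - C ζ ∣ s := Polynomial.dvd_iff_isRoot.2 hζroot
    have hXC : (X - C ζ : Polynomial ℂ) ≠ 0 := Polynomial.X_sub_C_ne_zero ζ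
    have ht0 : t ≠ 0 := fun h => hs (by rw [ht, h, mul_zero])
    have htdeg : t.natDegree = n := by
      have := Polynomial.natDegree_mul hXC ht0
      rw [← ht, hdeg, Polynomial.natDegree_X_sub_C] at this
      omega
    have htcirc : ∀ α : ℂ, ‖α‖ = 1 → t.eval α ≠ 0 := by
      intro α hα h
      exact hcirc α hα (by rw [ht, Polynomial.eval_mul, h, mul_zero])
    have hsdeg : s.degree = 1 + t.degree := by
      rw [ht, Polynomial.degree_mul, Polynomial.degree_X_sub_C]
    have htdeg0 : (0:WithBot ℕ) ≤ t.degree := Polynomial.zero_le_degree_iff.2 ht0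
    rcases (lt_or_gt_of_ne hζ1) with hζlt | hζgt
    · -- root inside the disc
      have hζball : ζ ∈ ball (0:ℂ) 1 := by
        rw [mem_ball, Complex.dist_eq, sub_zero]; exact hζlt
      obtain ⟨g, hg, r₁, hr₁deg, hr₁⟩ := ih t ht0 htdeg htcirc (_root_.dslope f ζ)
        (hf.dslopeMem hp hζball)
      refine ⟨g, hg, (X - C ζ) * r₁ + C (f ζ), ?_, ?_⟩
      · apply lt_of_le_of_lt (Polynomial.degree_add_le _ _)
        rw [max_lt_iff]
        constructor
        · rw [Polynomial.degree_mul, Polynomial.degree_X_sub_C, hsdeg]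
          exact WithBot.add_lt_add_left (by simp) hr₁deg
        · apply lt_of_le_of_lt (Polynomial.degree_C_le)
          rw [hsdeg]
          calc (0:WithBot ℕ) < 1 := by exact_mod_cast Nat.zero_lt_one
            _ ≤ 1 + t.degree := le_add_of_nonneg_right htdeg0
      · intro z
        have h1 : (z - ζ) * _root_.dslope f ζ z = f z - f ζ := by
          have := sub_smul_dslope f ζ z
          rwa [smul_eq_mul] at this
        have h2 := hr₁ z
        simp only [ht, Polynomial.eval_mul, Polynomial.eval_add, Polynomial.eval_sub,
          Polynomial.eval_X, Polynomial.eval_C]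
        linear_combination (z - ζ) * h2 - h1
    · -- root outside the closed disc
      obtain ⟨g₁, hg₁, r₁, hr₁deg, hr₁⟩ := ih t ht0 htdeg htcirc f hf
      refine ⟨fun z => (g₁ z - g₁ ζ) / (z - ζ), hg₁.div_sub hp hζgt, C (g₁ ζ) * t + r₁, ?_, ?_⟩
      · apply lt_of_le_of_lt (Polynomial.degree_add_le _ _)
        rw [max_lt_iff, hsdeg]
        have hlt : t.degree < 1 + t.degree := by
          have h' : (t.natDegree : WithBot ℕ) < ((1 + t.natDegree : ℕ) : WithBot ℕ) := by
            rw [Nat.cast_lt]; omega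
          rw [Polynomial.degree_eq_natDegree ht0]
          simpa [Nat.cast_add, Nat.cast_one] using h'
        constructor
        · refine lt_of_le_of_lt ?_ hlt
          apply le_trans (Polynomial.degree_mul_le _ _)
          calc (C (g₁ ζ)).degree + t.degree ≤ 0 + t.degree :=
                add_le_add (Polynomial.degree_C_le) le_rfl
            _ = t.degree := zero_add _
        · exact lt_of_lt_of_le hr₁deg hlt.le
      · intro z
        have key : (z - ζ) * ((g₁ z - g₁ ζ) / (z - ζ)) = g₁ z - g₁ ζ := by
          rcases eq_or_ne z ζ with rfl | hne
          · simp
          · rw [mul_comm, div_mul_cancel₀ _ (sub_ne_zero.2 hne)]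
        have h2 := hr₁ z
        simp only [ht, Polynomial.eval_mul, Polynomial.eval_add, Polynomial.eval_sub,
          Polynomial.eval_X, Polynomial.eval_C]
        linear_combination h2 - Polynomial.eval z t * key

lemma le_one_add_rpow {x p : ℝ} (hx : 0 ≤ x) (hp : 1 ≤ p) : x ≤ 1 + x ^ p := by
  rcases le_total x 1 with h | h
  · nlinarith [Real.rpow_nonneg hx p]
  · have h1 : x ^ (1:ℝ) ≤ x ^ p := Real.rpow_le_rpow_of_exponent_le h hp
    rw [Real.rpow_one] at h1; linarith

/-- Growth estimate: an `H^p` function grows at most like `(1-|w|)⁻¹`. -/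
lemma hp_growth {p : ℝ} (hp : 1 ≤ p) {f : ℂ → ℂ} (hf : MemHp p f) :
    ∃ C : ℝ, 0 ≤ C ∧ ∀ w ∈ ball (0:ℂ) 1,
      ‖f w‖ * (1 - ‖w‖) ≤ C := by
  obtain ⟨haf, Cf, hCf⟩ := hf
  have hp0 : (0:ℝ) ≤ p := le_trans zero_le_one hp
  set Cf' : ℝ := max Cf 0 with hCf'def
  have hCf0 : 0 ≤ Cf' := le_max_right _ _
  refine ⟨(2 * Real.pi + Cf') / Real.pi, by positivity, fun w hw => ?_⟩
  have ha1 : ‖w‖ < 1 := by simpa [Complex.dist_eq] using hw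
  have ha0 : 0 ≤ ‖w‖ := norm_nonneg w
  set a : ℝ := ‖w‖ with hadef
  set ρ : ℝ := (1 + a) / 2 with hρdef
  have hρ1 : ρ < 1 := by rw [hρdef]; linarith
  have hρa : a < ρ := by rw [hρdef]; linarith
  have hρ0 : 0 < ρ := by rw [hρdef]; linarith
  set d : ℝ := (1 - a) / 2 with hddef
  have hd0 : 0 < d := by rw [hddef]; linarith
  have hρd : ρ - a = d := by rw [hρdef, hddef]; ring
  -- Cauchy integral formula
  have hdiff : DiffContOnCl ℂ f (ball (0:ℂ) ρ) := by
    constructor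
    · exact haf.differentiableOn.mono (ball_subset_ball hρ1.le)
    · apply haf.continuousOn.mono
      rw [closure_ball (0:ℂ) (ne_of_gt hρ0)]
      intro z hz
      rw [mem_closedBall] at hz
      rw [mem_ball]
      exact lt_of_le_of_lt hz hρ1
  have hwball : w ∈ ball (0:ℂ) ρ := by
    rw [mem_ball, Complex.dist_eq, sub_zero, ← hadef]; exact hρa
  have hC := hdiff.circleIntegral_sub_inv_smul hwball
  -- pointwise bound for the integrand
  have hcirc_int : ∀ θ : ℝ, ‖deriv (circleMap 0 ρ) θ •
      ((circleMap 0 ρ θ - w)⁻¹ • f (circleMap 0 ρ θ))‖ ≤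
      (1 + ‖f ((ρ:ℂ) * Complex.exp (θ * Complex.I))‖ ^ p) / d := by
    intro θ
    have hzmap : circleMap 0 ρ θ = (ρ:ℂ) * Complex.exp (θ * Complex.I) := circleMap_zero ρ θ
    have hzabs : ‖circleMap 0 ρ θ‖ = ρ := by
      rw [norm_circleMap_zero, _root_.abs_of_pos hρ0]
    have hzw : d ≤ ‖circleMap 0 ρ θ - w‖ := by
      have h1 : ‖circleMap 0 ρ θ‖ - ‖w‖ ≤
          ‖circleMap 0 ρ θ - w‖ := by
        simpa using norm_sub_norm_le (circleMap 0 ρ θ) w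
      rw [hzabs, ← hadef] at h1
      linarith
    have hderiv : ‖deriv (circleMap 0 ρ) θ‖ = ρ := by
      rw [deriv_circleMap]
      simp [norm_circleMap_zero, _root_.abs_of_pos hρ0]
    rw [smul_eq_mul, smul_eq_mul, norm_mul, norm_mul, hderiv, norm_inv]
    calc ρ * ((‖circleMap 0 ρ θ - w‖)⁻¹ * ‖f (circleMap 0 ρ θ)‖)
        ≤ 1 * (d⁻¹ * (1 + ‖f (circleMap 0 ρ θ)‖ ^ p)) := by
          apply mul_le_mul hρ1.le _ (by positivity) (by norm_num)
          exact mul_le_mul (inv_anti₀ hd0 hzw)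
            (le_one_add_rpow (norm_nonneg _) hp) (norm_nonneg _) (by positivity)
      _ = (1 + ‖f ((ρ:ℂ) * Complex.exp (θ * Complex.I))‖ ^ p) / d := by
          rw [hzmap, one_mul, div_eq_inv_mul]
  -- bound the norm of the circle integral
  have hint := int_integrand haf.continuousOn hp0 hρ0.le hρ1 (0:ℝ) (2 * Real.pi)
  have hmaj : IntervalIntegrable (fun θ : ℝ =>
      (1 + ‖f ((ρ:ℂ) * Complex.exp (θ * Complex.I))‖ ^ p) / d)
      volume (0:ℝ) (2 * Real.pi) :=
    (intervalIntegrable_const.add hint).div_const _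
  have hGcont : Continuous fun θ : ℝ => deriv (circleMap 0 ρ) θ •
      ((circleMap 0 ρ θ - w)⁻¹ • f (circleMap 0 ρ θ)) := by
    have hfc : Continuous fun θ : ℝ => f (circleMap 0 ρ θ) := by
      have h := cont_circle haf.continuousOn hρ0.le hρ1
      have : (fun θ : ℝ => f (circleMap 0 ρ θ)) =
          fun θ : ℝ => f ((ρ:ℂ) * Complex.exp (θ * Complex.I)) := by
        funext θ; rw [circleMap_zero]
      rw [this]; exact h
    have hderiv : deriv (circleMap 0 ρ) = fun θ : ℝ => circleMap 0 ρ θ * I :=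
      funext fun θ => deriv_circleMap _ _ _
    have hne : ∀ θ : ℝ, circleMap 0 ρ θ - w ≠ 0 := by
      intro θ h
      rw [sub_eq_zero] at h
      have h2 : ‖circleMap 0 ρ θ‖ = ρ := by
        rw [norm_circleMap_zero, _root_.abs_of_pos hρ0]
      rw [h, ← hadef] at h2
      exact absurd h2 (ne_of_lt hρa)
    have hsub : Continuous fun θ : ℝ => (circleMap 0 ρ θ - w)⁻¹ :=
      ((continuous_circleMap 0 ρ).sub continuous_const).inv₀ hne
    rw [hderiv]
    exact ((continuous_circleMap 0 ρ).mul continuous_const).smul (hsub.smul hfc)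
  have h2 : ‖∮ z in C(0, ρ), (z - w)⁻¹ • f z‖ ≤ (2 * Real.pi + Cf') / d := by
    rw [circleIntegral]
    calc ‖∫ θ in (0:ℝ)..(2 * Real.pi), deriv (circleMap 0 ρ) θ •
          ((circleMap 0 ρ θ - w)⁻¹ • f (circleMap 0 ρ θ))‖
        ≤ ∫ θ in (0:ℝ)..(2 * Real.pi), ‖deriv (circleMap 0 ρ) θ •
          ((circleMap 0 ρ θ - w)⁻¹ • f (circleMap 0 ρ θ))‖ :=
          intervalIntegral.norm_integral_le_integral_norm Real.two_pi_pos.le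
      _ ≤ ∫ θ in (0:ℝ)..(2 * Real.pi),
          (1 + ‖f ((ρ:ℂ) * Complex.exp (θ * Complex.I))‖ ^ p) / d :=
          intervalIntegral.integral_mono_on Real.two_pi_pos.le
            (hGcont.norm.intervalIntegrable _ _) hmaj (fun θ _ => hcirc_int θ)
      _ = ((∫ θ in (0:ℝ)..(2 * Real.pi), (1:ℝ)) + ∫ θ in (0:ℝ)..(2 * Real.pi),
          ‖f ((ρ:ℂ) * Complex.exp (θ * Complex.I))‖ ^ p) / d := by
          rw [intervalIntegral.integral_div, intervalIntegral.integral_add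
            intervalIntegrable_const hint]
      _ ≤ (2 * Real.pi + Cf') / d := by
          apply (div_le_div_iff_of_pos_right hd0).mpr
          have e1 : (∫ _ in (0:ℝ)..(2 * Real.pi), (1:ℝ)) = 2 * Real.pi := by simp
          have e2 : (∫ θ in (0:ℝ)..(2 * Real.pi),
              ‖f ((ρ:ℂ) * Complex.exp (θ * Complex.I))‖ ^ p) ≤ Cf' :=
            le_trans (hCf ρ hρ0.le hρ1) (le_max_left Cf 0)
          rw [e1]
          linarith
  have hnorm : 2 * Real.pi * ‖f w‖ ≤ (2 * Real.pi + Cf') / d := by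
    have h1 : ‖(2 * (Real.pi:ℂ) * I) • f w‖ = 2 * Real.pi * ‖f w‖ := by
      rw [norm_smul]
      simp [norm_mul, Complex.norm_I, _root_.abs_of_pos Real.pi_pos,
        Complex.norm_two]
    calc 2 * Real.pi * ‖f w‖ = ‖(2 * (Real.pi:ℂ) * I) • f w‖ := h1.symm
      _ = ‖∮ z in C(0, ρ), (z - w)⁻¹ • f z‖ := by rw [hC]
      _ ≤ (2 * Real.pi + Cf') / d := h2
  have h3 : 2 * Real.pi * ‖f w‖ * d ≤ 2 * Real.pi + Cf' :=
    (le_div_iff₀ hd0).mp hnorm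
  have hdd : 1 - a = 2 * d := by rw [hddef]; ring
  rw [hdd, le_div_iff₀ Real.pi_pos]
  calc ‖f w‖ * (2 * d) * Real.pi = 2 * Real.pi * ‖f w‖ * d := by ring
    _ ≤ 2 * Real.pi + Cf' := h3

set_option maxHeartbeats 1000000 in
/-- lower bound for `|1 - r e^{iθ}|` on `[0, 2π]`. -/
lemma circle_lb {r θ : ℝ} (hr0 : 0 ≤ r) (hr1 : r ≤ 1) (hθ0 : 0 ≤ θ) (hθ2 : θ ≤ 2 * Real.pi) :
    min θ (2 * Real.pi - θ) / Real.pi ≤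
      ‖1 - (r:ℂ) * Complex.exp (θ * Complex.I)‖ := by
  have hπ := Real.pi_pos
  set m := min θ (2 * Real.pi - θ) with hm
  have hm0 : 0 ≤ m := le_min hθ0 (by linarith)
  have hmπ : m ≤ Real.pi := by
    rcases le_total θ (2 * Real.pi - θ) with h | h
    · rw [hm, min_eq_left h]; linarith
    · rw [hm, min_eq_right h]; linarith
  have hNS : Complex.normSq (1 - (r:ℂ) * Complex.exp (θ * Complex.I))
      = 1 - 2 * r * Real.cos θ + r ^ 2 := by
    simp only [Complex.normSq_apply, Complex.sub_re, Complex.sub_im, Complex.mul_re,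
      Complex.mul_im, Complex.one_re, Complex.one_im, Complex.ofReal_re, Complex.ofReal_im,
      Complex.exp_ofReal_mul_I_re, Complex.exp_ofReal_mul_I_im, zero_mul, sub_zero, zero_sub,
      zero_add, mul_zero]
    linear_combination (r ^ 2) * (Real.sin_sq_add_cos_sq θ)
  have hkey : (m / Real.pi) ^ 2 ≤ 1 - 2 * r * Real.cos θ + r ^ 2 := by
    have hs2 : 1 - 2 * r * Real.cos θ + r ^ 2 - Real.sin θ ^ 2
        = (r - Real.cos θ) ^ 2 + (1 - r ^ 2) * (1 - 1) + (1 - Real.sin θ ^ 2 - Real.cos θ ^ 2) := by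
      ring
    have hpyth := Real.sin_sq_add_cos_sq θ
    rcases le_or_gt (Real.cos θ) 0 with hc | hc
    · have h1 : (m / Real.pi) ^ 2 ≤ 1 := by
        rw [div_pow, div_le_one (by positivity)]
        nlinarith
      nlinarith
    · have hθcase : θ ≤ Real.pi / 2 ∨ 3 * Real.pi / 2 ≤ θ := by
        by_contra h
        push_neg at h
        have := Real.cos_nonpos_of_pi_div_two_le_of_le h.1.le (by linarith [h.2])
        linarith
      rcases hθcase with h | h
      · have hsin : 2 / Real.pi * θ ≤ Real.sin θ := Real.mul_le_sin hθ0 h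
        have hsin0 : 0 ≤ 2 / Real.pi * θ := by positivity
        have hmθ : m ≤ θ := min_le_left _ _
        have hsq : (2 / Real.pi * θ) ^ 2 ≤ Real.sin θ ^ 2 := by nlinarith
        have hmsq : m ^ 2 ≤ θ ^ 2 := by nlinarith
        have e1 : (2 / Real.pi * θ) ^ 2 * Real.pi ^ 2 = 4 * θ ^ 2 := by
          field_simp; ring
        have e2 : (2 / Real.pi * θ) ^ 2 * Real.pi ^ 2 ≤ Real.sin θ ^ 2 * Real.pi ^ 2 :=
          mul_le_mul_of_nonneg_right hsq (sq_nonneg _)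
        have e2' : 4 * θ ^ 2 ≤ Real.sin θ ^ 2 * Real.pi ^ 2 := by rw [← e1]; exact e2
        have e3 : Real.sin θ ^ 2 ≤ 1 - 2 * r * Real.cos θ + r ^ 2 := by
          nlinarith [sq_nonneg (r - Real.cos θ), hpyth]
        have e4 : Real.sin θ ^ 2 * Real.pi ^ 2 ≤ (1 - 2 * r * Real.cos θ + r ^ 2) * Real.pi ^ 2 :=
          mul_le_mul_of_nonneg_right e3 (sq_nonneg _)
        rw [div_pow, div_le_iff₀ (by positivity)]
        linarith [sq_nonneg θ]
      · have h2 : Real.sin (2 * Real.pi - θ) = - Real.sin θ := by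
          rw [Real.sin_sub]
          simp [Real.sin_two_pi, Real.cos_two_pi]
        have hsin : 2 / Real.pi * (2 * Real.pi - θ) ≤ Real.sin (2 * Real.pi - θ) :=
          Real.mul_le_sin (by linarith) (by linarith)
        rw [h2] at hsin
        have hsin0 : 0 ≤ 2 / Real.pi * (2 * Real.pi - θ) :=
          mul_nonneg (by positivity) (by linarith)
        have hmθ : m ≤ 2 * Real.pi - θ := min_le_right _ _
        have hsq : (2 / Real.pi * (2 * Real.pi - θ)) ^ 2 ≤ Real.sin θ ^ 2 := by nlinarith
        have hmsq : m ^ 2 ≤ (2 * Real.pi - θ) ^ 2 := by nlinarith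
        have e1 : (2 / Real.pi * (2 * Real.pi - θ)) ^ 2 * Real.pi ^ 2
            = 4 * (2 * Real.pi - θ) ^ 2 := by
          field_simp; ring
        have e2 : (2 / Real.pi * (2 * Real.pi - θ)) ^ 2 * Real.pi ^ 2
            ≤ Real.sin θ ^ 2 * Real.pi ^ 2 :=
          mul_le_mul_of_nonneg_right hsq (sq_nonneg _)
        have e2' : 4 * (2 * Real.pi - θ) ^ 2 ≤ Real.sin θ ^ 2 * Real.pi ^ 2 := by rw [← e1]; exact e2
        have e3 : Real.sin θ ^ 2 ≤ 1 - 2 * r * Real.cos θ + r ^ 2 := by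
          nlinarith [sq_nonneg (r - Real.cos θ), hpyth]
        have e4 : Real.sin θ ^ 2 * Real.pi ^ 2 ≤ (1 - 2 * r * Real.cos θ + r ^ 2) * Real.pi ^ 2 :=
          mul_le_mul_of_nonneg_right e3 (sq_nonneg _)
        rw [div_pow, div_le_iff₀ (by positivity)]
        linarith [sq_nonneg (2 * Real.pi - θ)]
  rw [Complex.norm_def]
  rw [Real.le_sqrt (by positivity) (Complex.normSq_nonneg _)]
  rw [hNS]
  exact hkey

/-- uniform bound for the singular integral. -/
lemma circle_integral_bound : ∃ C0 : ℝ, ∀ r : ℝ, 0 ≤ r → r < 1 → ∀ φ : ℝ,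
    (∫ θ in (0:ℝ)..(2 * Real.pi),
      (‖1 - (r:ℂ) * Complex.exp (((θ - φ):ℝ) * Complex.I)‖) ^ (-(1/2) : ℝ)) ≤ C0 := by
  have hπ := Real.pi_pos
  set H : ℝ → ℝ := fun θ => Real.pi ^ ((1:ℝ)/2) *
    (θ ^ (-(1/2):ℝ) + (2 * Real.pi - θ) ^ (-(1/2):ℝ)) with hHdef
  have hHint : IntervalIntegrable H volume (0:ℝ) (2 * Real.pi) := by
    apply IntervalIntegrable.const_mul
    apply IntervalIntegrable.add
    · exact intervalIntegral.intervalIntegrable_rpow' (by norm_num)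
    · have := (intervalIntegral.intervalIntegrable_rpow'
        (a := 0) (b := 2 * Real.pi) (r := (-(1/2):ℝ)) (by norm_num)).comp_sub_left (2 * Real.pi)
      simpa using this.symm
  refine ⟨∫ θ in (0:ℝ)..(2 * Real.pi), H θ, fun r hr0 hr1 φ => ?_⟩
  set G : ℝ → ℝ := fun u =>
    (‖1 - (r:ℂ) * Complex.exp ((u:ℝ) * Complex.I)‖) ^ (-(1/2) : ℝ) with hGdef
  have hGcont : Continuous G := by
    have h1 : Continuous fun u : ℝ => 1 - (r:ℂ) * Complex.exp ((u:ℝ) * Complex.I) := by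
      apply continuous_const.sub
      exact continuous_const.mul (Complex.continuous_exp.comp (by continuity))
    have h2 : Continuous fun u : ℝ =>
        ‖1 - (r:ℂ) * Complex.exp ((u:ℝ) * Complex.I)‖ :=
      continuous_norm.comp h1
    rw [continuous_iff_continuousAt]
    intro u
    apply ContinuousAt.rpow_const h2.continuousAt
    left
    intro h
    have hz : (1:ℂ) - (r:ℂ) * Complex.exp ((u:ℝ) * Complex.I) = 0 := by
      exact norm_eq_zero.mp h
    rw [sub_eq_zero] at hz
    have hlt : ‖(r:ℂ) * Complex.exp ((u:ℝ) * Complex.I)‖ < 1 := by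
      simp only [norm_mul, Complex.norm_real, Real.norm_eq_abs, Complex.norm_exp_ofReal_mul_I, mul_one,
        _root_.abs_of_nonneg hr0]
      exact hr1
    rw [← hz] at hlt
    simp at hlt
  -- shift the integral by periodicity
  have hper : Function.Periodic G (2 * Real.pi) := by
    intro u
    have : Complex.exp (((u + 2 * Real.pi):ℝ) * Complex.I)
        = Complex.exp ((u:ℝ) * Complex.I) := by
      rw [show (((u + 2 * Real.pi):ℝ) : ℂ) * Complex.I
          = (u:ℝ) * Complex.I + 2 * (Real.pi:ℂ) * Complex.I by push_cast; ring]
      rw [Complex.exp_add, Complex.exp_two_pi_mul_I, mul_one]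
    simp only [hGdef, this]
  have hshift : (∫ θ in (0:ℝ)..(2 * Real.pi), G (θ - φ)) = ∫ θ in (0:ℝ)..(2 * Real.pi), G θ := by
    rw [intervalIntegral.integral_comp_sub_right]
    have h1 : (0:ℝ) - φ + 2 * Real.pi = 2 * Real.pi - φ := by ring
    have := hper.intervalIntegral_add_eq ((0:ℝ) - φ) 0
    rw [h1] at this
    simpa [zero_sub, zero_add] using this
  rw [show (∫ θ in (0:ℝ)..(2 * Real.pi),
      (‖1 - (r:ℂ) * Complex.exp (((θ - φ):ℝ) * Complex.I)‖) ^ (-(1/2) : ℝ))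
      = ∫ θ in (0:ℝ)..(2 * Real.pi), G (θ - φ) from rfl]
  rw [hshift]
  -- compare with the majorant a.e.
  apply intervalIntegral.integral_mono_ae_restrict Real.two_pi_pos.le
    (hGcont.intervalIntegrable _ _) hHint
  rw [Filter.EventuallyLE, MeasureTheory.ae_restrict_iff' measurableSet_Icc]
  have h0 : volume ({0, 2 * Real.pi} : Set ℝ) = 0 :=
    (Set.toFinite _).measure_zero volume
  refine MeasureTheory.ae_iff.2 (measure_mono_null ?_ h0)
  intro θ hθ
  simp only [Set.mem_setOf_eq] at hθ
  push_neg at hθ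
  obtain ⟨hθIcc, hθbad⟩ := hθ
  by_contra hmem
  simp only [Set.mem_insert_iff, Set.mem_singleton_iff] at hmem
  push_neg at hmem
  obtain ⟨hθ0', hθ2'⟩ := hmem
  obtain ⟨hθ0, hθ2⟩ := hθIcc
  have hθpos : 0 < θ := lt_of_le_of_ne hθ0 (Ne.symm hθ0')
  have hθlt : θ < 2 * Real.pi := lt_of_le_of_ne hθ2 hθ2'
  refine absurd hθbad (not_lt.mpr ?_)
  -- pointwise bound
  set m := min θ (2 * Real.pi - θ) with hm
  have hm0 : 0 < m := lt_min hθpos (by linarith)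
  have hlb := circle_lb hr0 hr1.le hθ0 hθ2
  have h1 : G θ ≤ (m / Real.pi) ^ (-(1/2) : ℝ) :=
    Real.rpow_le_rpow_of_nonpos (by positivity) hlb (by norm_num)
  have h2 : (m / Real.pi) ^ (-(1/2) : ℝ) = Real.pi ^ ((1:ℝ)/2) * m ^ (-(1/2) : ℝ) := by
    rw [Real.div_rpow hm0.le hπ.le, Real.rpow_neg hπ.le, div_inv_eq_mul, mul_comm]
  have h3 : m ^ (-(1/2) : ℝ) ≤ θ ^ (-(1/2):ℝ) + (2 * Real.pi - θ) ^ (-(1/2):ℝ) := by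
    rcases le_total θ (2 * Real.pi - θ) with h | h
    · rw [hm, min_eq_left h]
      have : (0:ℝ) ≤ (2 * Real.pi - θ) ^ (-(1/2):ℝ) := Real.rpow_nonneg (by linarith) _
      linarith
    · rw [hm, min_eq_right h]
      have : (0:ℝ) ≤ θ ^ (-(1/2):ℝ) := Real.rpow_nonneg hθ0 _
      linarith
  calc G θ ≤ (m / Real.pi) ^ (-(1/2) : ℝ) := h1
    _ = Real.pi ^ ((1:ℝ)/2) * m ^ (-(1/2) : ℝ) := h2
    _ ≤ H θ := by
        rw [hHdef]
        have hπp : (0:ℝ) ≤ Real.pi ^ ((1:ℝ)/2) := Real.rpow_nonneg hπ.le _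
        exact mul_le_mul_of_nonneg_left h3 hπp

/-- The singular function `(1 - ᾱ z)^{-1/(2p)}` is in `H^p`. -/
lemma singular_memHp {p : ℝ} (hp : 1 ≤ p) {α : ℂ} (hα : ‖α‖ = 1) :
    MemHp p (fun z => (1 - (starRingEnd ℂ) α * z) ^ ((( -(1/(2*p)) : ℝ)) : ℂ)) := by
  have hppos : 0 < p := lt_of_lt_of_le one_pos hp
  have hαc : ‖(starRingEnd ℂ) α‖ = 1 := by rwa [Complex.norm_conj]
  -- analyticity
  have hbase : AnalyticOn ℂ (fun z : ℂ => 1 - (starRingEnd ℂ) α * z) (ball (0:ℂ) 1) :=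
    analyticOn_const.sub (analyticOn_const.mul analyticOn_id)
  have hslit : ∀ z ∈ ball (0:ℂ) 1, (1 - (starRingEnd ℂ) α * z) ∈ Complex.slitPlane := by
    intro z hz
    rw [mem_ball, Complex.dist_eq, sub_zero] at hz
    left
    have h1 : ‖(starRingEnd ℂ) α * z‖ < 1 := by
      rw [norm_mul, hαc, one_mul]; exact hz
    have h2 : ((starRingEnd ℂ) α * z).re ≤ ‖(starRingEnd ℂ) α * z‖ :=
      Complex.re_le_norm _
    simp only [Complex.sub_re, Complex.one_re]
    linarith
  have hana : AnalyticOn ℂ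
      (fun z => (1 - (starRingEnd ℂ) α * z) ^ ((( -(1/(2*p)) : ℝ)) : ℂ)) (ball (0:ℂ) 1) :=
    hbase.cpow analyticOn_const hslit
  obtain ⟨C0, hC0⟩ := circle_integral_bound
  refine ⟨hana, C0, fun r hr0 hr1 => ?_⟩
  set φ : ℝ := α.arg with hφ
  have hαexp : (starRingEnd ℂ) α = Complex.exp (-(φ:ℂ) * Complex.I) := by
    have h1 : α = Complex.exp ((φ:ℂ) * Complex.I) := by
      conv_lhs => rw [← Complex.norm_mul_exp_arg_mul_I α]
      rw [hα, Complex.ofReal_one, one_mul]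
    rw [h1, ← Complex.exp_conj, map_mul, Complex.conj_ofReal, Complex.conj_I]
    congr 1
    ring
  have hpt : ∀ θ : ℝ, ‖(fun z => (1 - (starRingEnd ℂ) α * z) ^ ((( -(1/(2*p)) : ℝ)) : ℂ))
          ((r:ℂ) * Complex.exp (θ * Complex.I))‖ ^ p
      = (‖1 - (r:ℂ) * Complex.exp (((θ - φ):ℝ) * Complex.I)‖) ^ (-(1/2) : ℝ) := by
    intro θ
    have harg : (starRingEnd ℂ) α * ((r:ℂ) * Complex.exp (θ * Complex.I))
        = (r:ℂ) * Complex.exp (((θ - φ):ℝ) * Complex.I) := by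
      rw [hαexp, ← mul_assoc, mul_comm (Complex.exp _) ((r:ℂ)), mul_assoc, ← Complex.exp_add]
      congr 2
      push_cast
      ring
    simp only [harg]
    rw [Complex.norm_cpow_real, ← Real.rpow_mul (norm_nonneg _)]
    congr 1
    field_simp
  calc (∫ θ in (0:ℝ)..(2 * Real.pi), ‖(fun z => (1 - (starRingEnd ℂ) α * z) ^ ((( -(1/(2*p)) : ℝ)) : ℂ))
          ((r:ℂ) * Complex.exp (θ * Complex.I))‖ ^ p)
      = ∫ θ in (0:ℝ)..(2 * Real.pi),
        (‖1 - (r:ℂ) * Complex.exp (((θ - φ):ℝ) * Complex.I)‖) ^ (-(1/2) : ℝ) :=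
      intervalIntegral.integral_congr (fun θ _ => hpt θ)
    _ ≤ C0 := hC0 r hr0 hr1 φ

/-- If `s` has a root on the unit circle then the decomposition fails. -/
lemma forward_aux {p : ℝ} (hp : 1 < p) {s : Polynomial ℂ} {α : ℂ}
    (hα : ‖α‖ = 1) (hroot : s.eval α = 0)
    (heq : Hp p = polyMul s (Hp p) + polyLt s.degree) : False := by
  have hppos : 0 < p := lt_trans one_pos hp
  set a : ℝ := 1/(2*p) with hadef
  have ha0 : 0 < a := by rw [hadef]; positivity
  set f₀ : ℂ → ℂ := fun z => (1 - (starRingEnd ℂ) α * z) ^ (((-a : ℝ)) : ℂ) with hf₀def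
  have hf₀ : MemHp p f₀ := singular_memHp hp.le hα
  have hf₀mem : f₀ ∈ polyMul s (Hp p) + polyLt s.degree := by
    rw [← heq]; exact hf₀
  rw [Set.mem_add] at hf₀mem
  obtain ⟨x, hx, y, hy, hxy⟩ := hf₀mem
  obtain ⟨g, hg, hgx⟩ := hx
  obtain ⟨rp, hrpdeg, hrpy⟩ := hy
  -- factor out the root
  obtain ⟨u, hu⟩ : X - C α ∣ s := Polynomial.dvd_iff_isRoot.2 hroot
  -- bounds
  obtain ⟨Mu, hMu⟩ := (isCompact_closedBall (0:ℂ) 1).exists_bound_of_continuousOn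
    u.continuous.continuousOn
  have hMu0 : 0 ≤ Mu := le_trans (norm_nonneg _) (hMu 0 (by simp))
  obtain ⟨Mr, hMr⟩ := (isCompact_closedBall (0:ℂ) 1).exists_bound_of_continuousOn
    rp.continuous.continuousOn
  have hMr0 : 0 ≤ Mr := le_trans (norm_nonneg _) (hMr 0 (by simp))
  obtain ⟨Cg, hCg0, hCg⟩ := hp_growth hp.le hg
  set B : ℝ := Mu * Cg + Mr with hBdef
  have hB0 : 0 ≤ B := by positivity
  -- the key estimate along the radius to α
  have hkey : ∀ t : ℝ, 0 ≤ t → t < 1 → (1 - t) ^ (-a : ℝ) ≤ B := by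
    intro t ht0 ht1
    set z : ℂ := (t:ℂ) * α with hzdef
    have hzabs : ‖z‖ = t := by
      rw [hzdef, norm_mul, Complex.norm_real, Real.norm_eq_abs, hα, mul_one, _root_.abs_of_nonneg ht0]
    have hzball : z ∈ ball (0:ℂ) 1 := by
      rw [mem_ball, Complex.dist_eq, sub_zero, hzabs]; exact ht1
    have hzcball : z ∈ closedBall (0:ℂ) 1 := ball_subset_closedBall hzball
    -- value of f₀ at z
    have hf₀z : ‖f₀ z‖ = (1 - t) ^ (-a : ℝ) := by
      have h1 : (starRingEnd ℂ) α * z = (t : ℂ) := by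
        rw [hzdef, ← mul_assoc, mul_comm ((starRingEnd ℂ) α) ((t:ℂ)), mul_assoc]
        rw [mul_comm ((starRingEnd ℂ) α) α, Complex.mul_conj]
        rw [Complex.normSq_eq_norm_sq, hα]
        norm_num
      rw [hf₀def]
      simp only [h1]
      have h2 : (1 : ℂ) - (t:ℂ) = ((1 - t : ℝ) : ℂ) := by push_cast; ring
      rw [h2, Complex.norm_cpow_real, Complex.norm_real, Real.norm_eq_abs, _root_.abs_of_nonneg (by linarith)]
    -- value of the decomposition at z
    have hdecomp : f₀ z = s.eval z * g z + rp.eval z := by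
      have hx' : x z = s.eval z * g z := by rw [← hgx]
      have hy' : y z = rp.eval z := by rw [hrpy]
      have h := congrFun hxy z
      simp only [Pi.add_apply] at h
      rw [hx', hy'] at h
      exact h.symm
    -- bound |s.eval z|
    have hsz : ‖s.eval z‖ ≤ (1 - t) * Mu := by
      rw [hu, Polynomial.eval_mul]
      rw [norm_mul]
      have h1 : ‖(X - C α : Polynomial ℂ).eval z‖ = 1 - t := by
        simp only [Polynomial.eval_sub, Polynomial.eval_X, Polynomial.eval_C]
        rw [hzdef]
        have : (t:ℂ) * α - α = ((t - 1 : ℝ):ℂ) * α := by push_cast; ring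
        rw [this, norm_mul, Complex.norm_real, Real.norm_eq_abs, hα, mul_one,
          _root_.abs_of_nonpos (by linarith)]
        ring
      rw [h1]
      exact mul_le_mul_of_nonneg_left (hMu z hzcball) (by linarith)
    -- bound |g z|
    have hgz : ‖g z‖ * (1 - t) ≤ Cg := by
      have := hCg z hzball
      rwa [hzabs] at this
    -- combine
    have hcomb : ‖f₀ z‖ ≤ B := by
      rw [hdecomp]
      calc ‖s.eval z * g z + rp.eval z‖
          ≤ ‖s.eval z * g z‖ + ‖rp.eval z‖ := by
            simpa using norm_add_le (s.eval z * g z) (rp.eval z)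
        _ ≤ Mu * Cg + Mr := by
            have h2 : ‖s.eval z * g z‖ ≤ Mu * Cg := by
              rw [norm_mul]
              calc ‖s.eval z‖ * ‖g z‖
                  ≤ ((1 - t) * Mu) * ‖g z‖ :=
                    mul_le_mul_of_nonneg_right hsz (norm_nonneg _)
                _ = Mu * (‖g z‖ * (1 - t)) := by ring
                _ ≤ Mu * Cg := mul_le_mul_of_nonneg_left hgz hMu0
            have h3 : ‖rp.eval z‖ ≤ Mr := hMr z hzcball
            linarith
    rw [← hf₀z]
    exact hcomb
  -- derive the contradiction
  have hB1 : (1:ℝ) ≤ B := by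
    have h := hkey 0 le_rfl one_pos
    rw [sub_zero, Real.one_rpow] at h
    exact h
  set X : ℝ := (B + 1) ^ (-(1/a) : ℝ) with hXdef
  have hX0 : 0 < X := Real.rpow_pos_of_pos (by linarith) _
  set ε : ℝ := min (1/2) X with hεdef
  have hε0 : 0 < ε := lt_min (by norm_num) hX0
  have hε1 : ε < 1 := lt_of_le_of_lt (min_le_left _ _) (by norm_num)
  have ht := hkey (1 - ε) (by linarith) (by linarith)
  rw [show (1 : ℝ) - (1 - ε) = ε by ring] at ht
  have hXε : X ^ (-a : ℝ) ≤ ε ^ (-a : ℝ) :=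
    Real.rpow_le_rpow_of_nonpos hε0 (min_le_right _ _) (by linarith)
  have hXa : X ^ (-a : ℝ) = B + 1 := by
    rw [hXdef, ← Real.rpow_mul (by linarith : (0:ℝ) ≤ B + 1)]
    rw [show (-(1/a)) * (-a) = 1 by field_simp]
    exact Real.rpow_one _
  rw [hXa] at hXε
  linarith

lemma poly_analyticOn (q : Polynomial ℂ) : AnalyticOn ℂ (fun z => q.eval z) (ball (0:ℂ) 1) :=
  (q.differentiable.differentiableOn).analyticOn isOpen_ball

lemma poly_memHp {p : ℝ} (hp : 0 ≤ p) (q : Polynomial ℂ) : MemHp p (fun z => q.eval z) := by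
  obtain ⟨M, hM⟩ := (isCompact_closedBall (0:ℂ) 1).exists_bound_of_continuousOn
    q.continuous.continuousOn
  exact memHp_of_bounded hp (poly_analyticOn q)
    (fun z hz => hM z (ball_subset_closedBall hz))


/-- `H^p = s·H^p + P_{deg s - 1}` if and only if `s` has no roots on the unit circle. -/
theorem Hp_eq_sHp_add_poly_iff_no_roots_on_circle (p : ℝ) (hp : 1 < p)
    (s : Polynomial ℂ) (hs : s ≠ 0) :
    Hp p = polyMul s (Hp p) + polyLt s.degree ↔
      ∀ α : ℂ, ‖α‖ = 1 → s.eval α ≠ 0 := by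
  have hp0 : (0:ℝ) ≤ p := by linarith
  constructor
  · intro heq α hα heval
    exact forward_aux hp hα heval heq
  · intro hcirc
    apply Set.Subset.antisymm
    · -- Hp ⊆ sHp + polys
      intro f hf
      obtain ⟨g, hg, r, hrdeg, hr⟩ :=
        hp_division hp0 s.natDegree s hs rfl hcirc f hf
      rw [Set.mem_add]
      refine ⟨fun z => s.eval z * g z, ⟨g, hg, rfl⟩, fun z => r.eval z, ⟨r, hrdeg, rfl⟩, ?_⟩
      funext z
      exact (hr z).symm
    · -- sHp + polys ⊆ Hp
      intro f hf
      rw [Set.mem_add] at hf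
      obtain ⟨x, hx, y, hy, hxy⟩ := hf
      obtain ⟨g, hg, hgx⟩ := hx
      obtain ⟨r, _, hry⟩ := hy
      rw [← hxy]
      have hx' : MemHp p x := by
        rw [← hgx]
        obtain ⟨M, hM⟩ := (isCompact_closedBall (0:ℂ) 1).exists_bound_of_continuousOn
          s.continuous.continuousOn
        exact MemHp.mul_bounded hp0 (poly_analyticOn s)
          (fun z hz => hM z (ball_subset_closedBall hz)) hg
      have hy' : MemHp p y := by
        rw [hry]
        exact poly_memHp hp0 r
      exact hx'.add hp0 hy'
end
end

section
/- Let s, q be coprime nonzero complex polynomials and define P̃ = {r ∈ P : r·q = r_1·s + r_2 for some polynomials r_1, r_2 of degree < deg(q)}. Set Q̃ = P_{deg(s)-deg(q)-1} if deg(s) > deg(q) and Q̃ = {0} otherwise. Then P_{deg(s)-1} = P̃ ⊕ Q̃ (direct sum of vector spaces). In particular P̃ = P_{deg(s)-1} if and only if deg(s) ≤ deg(q). -/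
open Polynomial Pointwise

/-- Any element of `P̃` has degree `< deg s`. -/
lemma aux_Pt_degree_lt (s q : Polynomial ℂ) (hs : s ≠ 0) (hq : q ≠ 0) (p : Polynomial ℂ)
    (hp : ∃ r₁ r₂ : Polynomial ℂ, r₁.degree < q.degree ∧ r₂.degree < q.degree ∧
      p * q = r₁ * s + r₂) : p.degree < s.degree := by
  obtain ⟨r₁, r₂, h1, h2, h3⟩ := hp
  have hsbot : s.degree ≠ ⊥ := by simpa [degree_eq_bot] using hs
  have hqbot : q.degree ≠ ⊥ := by simpa [degree_eq_bot] using hq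
  have hs0 : (0 : WithBot ℕ) ≤ s.degree := zero_le_degree_iff.2 hs
  by_cases hp0 : p = 0
  · simpa [hp0, degree_zero] using Ne.bot_lt hsbot
  have hkey : (p * q).degree < q.degree + s.degree := by
    rw [h3]
    refine lt_of_le_of_lt (degree_add_le _ _) (max_lt ?_ ?_)
    · calc (r₁ * s).degree ≤ r₁.degree + s.degree := degree_mul_le _ _
        _ < q.degree + s.degree := WithBot.add_lt_add_right hsbot h1
    · calc r₂.degree < q.degree := h2
        _ = q.degree + 0 := (add_zero _).symm
        _ ≤ q.degree + s.degree := add_le_add_right hs0 _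
  rw [degree_mul, add_comm p.degree q.degree,
    WithBot.add_lt_add_iff_left hqbot] at hkey
  exact hkey

/-- Construction: every `r` with `deg r < deg s` decomposes as an element of `P̃`
plus an element of `Q̃`. -/
lemma aux_decomp (s q : Polynomial ℂ) (hs : s ≠ 0) (hq : q ≠ 0) (r : Polynomial ℂ)
    (hr : r.degree < s.degree) :
    (∃ r₁ r₂ : Polynomial ℂ, r₁.degree < q.degree ∧ r₂.degree < q.degree ∧
      (r - (r * q % s) / q) * q = r₁ * s + r₂) ∧
    ((r * q % s) / q).degree < ((s.natDegree - q.natDegree : ℕ) : WithBot ℕ) := by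
  have hsbot : s.degree ≠ ⊥ := by simpa [degree_eq_bot] using hs
  have hqbot : q.degree ≠ ⊥ := by simpa [degree_eq_bot] using hq
  set w := r * q % s with hw
  set u := w / q with hu
  have hwdeg : w.degree < s.degree := EuclideanDomain.mod_lt _ hs
  have hr2 : (w % q).degree < q.degree := EuclideanDomain.mod_lt _ hq
  have hdm1 : s * (r * q / s) + w = r * q := EuclideanDomain.div_add_mod (r * q) s
  have hdm2 : q * u + w % q = w := EuclideanDomain.div_add_mod w q
  constructor
  · refine ⟨r * q / s, w % q, ?_, hr2, ?_⟩
    · -- degree of the quotient r*q/s is < deg q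
      by_cases h0 : r * q / s = 0
      · rw [h0, degree_zero]; exact Ne.bot_lt hqbot
      · have hle : s.degree ≤ (r * q).degree := by
          by_contra hcon
          exact h0 ((Polynomial.div_eq_zero_iff hs).2 (lt_of_not_ge hcon))
        have := degree_add_div hs hle
        rw [degree_mul] at this
        have hlt : s.degree + (r * q / s).degree < s.degree + q.degree := by
          rw [this]
          exact WithBot.add_lt_add_right hqbot hr
        exact (WithBot.add_lt_add_iff_left hsbot).1 hlt
    · -- the algebraic identity
      linear_combination -hdm1 - hdm2
  · -- degree bound on u
    by_cases h0 : u = 0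
    · rw [h0, degree_zero]; exact WithBot.bot_lt_coe _
    · have hqle : q.degree ≤ w.degree := by
        by_contra hcon
        exact h0 ((Polynomial.div_eq_zero_iff hq).2 (lt_of_not_ge hcon))
      have hdiv := degree_add_div hq hqle
      have hlt : q.degree + u.degree < s.degree := by rw [hdiv]; exact hwdeg
      rw [degree_eq_natDegree hq, degree_eq_natDegree h0, degree_eq_natDegree hs,
        ← Nat.cast_add, Nat.cast_lt] at hlt
      rw [degree_eq_natDegree h0, Nat.cast_lt]
      omega

/-- Decomposition `P_{deg s - 1} = P̃ ⊕ Q̃`, with `P̃ = P_{deg s -1}` iff `deg s ≤ deg q`. -/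
theorem poly_space_direct_sum (s q : Polynomial ℂ) (hs : s ≠ 0) (hq : q ≠ 0)
    (hco : IsCoprime s q) :
    ({r : Polynomial ℂ | r.degree < s.degree} =
        {r : Polynomial ℂ | ∃ r₁ r₂ : Polynomial ℂ, r₁.degree < q.degree ∧
          r₂.degree < q.degree ∧ r * q = r₁ * s + r₂} +
        {r : Polynomial ℂ | r.degree < ((s.natDegree - q.natDegree : ℕ) : WithBot ℕ)}) ∧
      ({r : Polynomial ℂ | ∃ r₁ r₂ : Polynomial ℂ, r₁.degree < q.degree ∧
          r₂.degree < q.degree ∧ r * q = r₁ * s + r₂} ∩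
        {r : Polynomial ℂ | r.degree < ((s.natDegree - q.natDegree : ℕ) : WithBot ℕ)} = {0}) ∧
      ({r : Polynomial ℂ | ∃ r₁ r₂ : Polynomial ℂ, r₁.degree < q.degree ∧
          r₂.degree < q.degree ∧ r * q = r₁ * s + r₂} =
        {r : Polynomial ℂ | r.degree < s.degree} ↔ s.degree ≤ q.degree) := by
  have hsbot : s.degree ≠ ⊥ := by simpa [degree_eq_bot] using hs
  have hqbot : q.degree ≠ ⊥ := by simpa [degree_eq_bot] using hq
  -- the sum decomposition
  have hsum : {r : Polynomial ℂ | r.degree < s.degree} =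
      {r : Polynomial ℂ | ∃ r₁ r₂ : Polynomial ℂ, r₁.degree < q.degree ∧
        r₂.degree < q.degree ∧ r * q = r₁ * s + r₂} +
      {r : Polynomial ℂ | r.degree < ((s.natDegree - q.natDegree : ℕ) : WithBot ℕ)} := by
    ext r
    constructor
    · intro hr
      obtain ⟨hmem, hdeg⟩ := aux_decomp s q hs hq r hr
      refine Set.mem_add.2 ⟨r - (r * q % s) / q, hmem, (r * q % s) / q, hdeg, ?_⟩
      ring
    · rintro ⟨a, ha, b, hb, rfl⟩
      have h1 : a.degree < s.degree := aux_Pt_degree_lt s q hs hq a ha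
      have h2 : b.degree < s.degree := by
        refine lt_of_lt_of_le hb ?_
        rw [degree_eq_natDegree hs, Nat.cast_le]
        exact Nat.sub_le _ _
      exact lt_of_le_of_lt (degree_add_le _ _) (max_lt h1 h2)
  -- the intersection is trivial
  have hinter : {r : Polynomial ℂ | ∃ r₁ r₂ : Polynomial ℂ, r₁.degree < q.degree ∧
        r₂.degree < q.degree ∧ r * q = r₁ * s + r₂} ∩
      {r : Polynomial ℂ | r.degree < ((s.natDegree - q.natDegree : ℕ) : WithBot ℕ)} = {0} := by
    ext r
    simp only [Set.mem_inter_iff, Set.mem_setOf_eq, Set.mem_singleton_iff]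
    constructor
    · rintro ⟨⟨r₁, r₂, h1, h2, h3⟩, hrQ⟩
      by_contra hr0
      -- degrees are finite
      have hndr : (r.natDegree : WithBot ℕ) < ((s.natDegree - q.natDegree : ℕ) : WithBot ℕ) := by
        rwa [degree_eq_natDegree hr0] at hrQ
      rw [Nat.cast_lt] at hndr
      have hnds : q.natDegree < s.natDegree := by omega
      have hqs : q.degree < s.degree := by
        rw [degree_eq_natDegree hq, degree_eq_natDegree hs, Nat.cast_lt]; exact hnds
      have hrq_lt : (r * q).degree < s.degree := by
        rw [degree_mul, degree_eq_natDegree hr0, degree_eq_natDegree hq,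
          degree_eq_natDegree hs, ← Nat.cast_add, Nat.cast_lt]
        omega
      have hr10 : r₁ = 0 := by
        by_contra hr10
        have h1s : s.degree ≤ (r₁ * s).degree := by
          rw [degree_mul, degree_eq_natDegree hr10, degree_eq_natDegree hs, ← Nat.cast_add,
            Nat.cast_le]
          omega
        have : (r₁ * s).degree < s.degree := by
          have heq : r₁ * s = r * q - r₂ := by rw [h3]; ring
          rw [heq]
          exact lt_of_le_of_lt (degree_sub_le _ _) (max_lt hrq_lt (lt_trans h2 hqs))
        exact absurd h1s (not_le_of_gt this)
      rw [hr10, zero_mul, zero_add] at h3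
      have : (r * q).degree < q.degree := h3 ▸ h2
      rw [degree_mul, degree_eq_natDegree hr0, degree_eq_natDegree hq, ← Nat.cast_add,
        Nat.cast_lt] at this
      omega
    · rintro rfl
      refine ⟨⟨0, 0, ?_, ?_, by ring⟩, ?_⟩
      · rw [degree_zero]; exact Ne.bot_lt hqbot
      · rw [degree_zero]; exact Ne.bot_lt hqbot
      · rw [degree_zero]; exact WithBot.bot_lt_coe _
  refine ⟨hsum, hinter, ?_⟩
  constructor
  · intro heq
    by_contra hcon
    have hqs : q.degree < s.degree := lt_of_not_ge hcon
    have hnds : q.natDegree < s.natDegree := by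
      rwa [degree_eq_natDegree hq, degree_eq_natDegree hs, Nat.cast_lt] at hqs
    have h1Q : (1 : Polynomial ℂ) ∈ {r : Polynomial ℂ |
        r.degree < ((s.natDegree - q.natDegree : ℕ) : WithBot ℕ)} := by
      simp only [Set.mem_setOf_eq, degree_one]
      have : ((0 : ℕ) : WithBot ℕ) < ((s.natDegree - q.natDegree : ℕ) : WithBot ℕ) := by
        rw [Nat.cast_lt]; omega
      simpa using this
    have h1P : (1 : Polynomial ℂ) ∈ {r : Polynomial ℂ | ∃ r₁ r₂ : Polynomial ℂ,
        r₁.degree < q.degree ∧ r₂.degree < q.degree ∧ r * q = r₁ * s + r₂} := by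
      rw [heq]
      simp only [Set.mem_setOf_eq, degree_one]
      calc (0 : WithBot ℕ) ≤ q.degree := zero_le_degree_iff.2 hq
        _ < s.degree := hqs
    have : (1 : Polynomial ℂ) ∈ ({0} : Set (Polynomial ℂ)) := hinter ▸ ⟨h1P, h1Q⟩
    exact one_ne_zero (Set.mem_singleton_iff.1 this)
  · intro hle
    ext r
    simp only [Set.mem_setOf_eq]
    constructor
    · intro hr
      exact aux_Pt_degree_lt s q hs hq r hr
    · intro hr
      obtain ⟨hmem, hdeg⟩ := aux_decomp s q hs hq r hr
      have hnd : s.natDegree ≤ q.natDegree := natDegree_le_natDegree hle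
      have hsub : s.natDegree - q.natDegree = 0 := by omega
      rw [hsub] at hdeg
      have hu0 : (r * q % s) / q = 0 := by
        rw [← degree_eq_bot]
        exact Nat.WithBot.lt_zero_iff.1 (by simpa using hdeg)
      rw [hu0, sub_zero] at hmem
      exact hmem
end
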